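/- For every n : ℕ, the smallest K-subspace of V_n that contains e_{Finset.univ} + e_∅ and is stable under the map v ↦ ā.mulVec v for every a ∈ P_{n,n} is exactly V_n⁺; and for every n ≥ 1, the smallest K-subspace of V_n that contains e_{Finset.univ} − e_∅ and is stable under all these maps is exactly V_n⁻. -/

import Mathlib

open Classical

/-- A partition in `P_{m,n}`: an equivalence relation on `Fin m ⊕ Fin n`. -/
abbrev Ptn (m n : ℕ) := Setoid (Fin m ⊕ Fin n)

/-- `(X,Y)` is a union of `a`-blocks. -/
def IsUnionOfBlocks {m n : ℕ} (a : Ptn m n) (X : Finset (Fin m)) (Y : Finset (Fin n)) :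
    Prop :=
  ∀ u v, a.r u v →
    (u ∈ Sum.inl '' (X : Set (Fin m)) ∪ Sum.inr '' (Y : Set (Fin n)) ↔
     v ∈ Sum.inl '' (X : Set (Fin m)) ∪ Sum.inr '' (Y : Set (Fin n)))

/-- The zero-one matrix `ā` associated to a partition `a`. -/
noncomputable def ptnMatrix (K : Type) [Semiring K] {m n : ℕ} (a : Ptn m n) :
    Matrix (Finset (Fin m)) (Finset (Fin n)) K :=
  Matrix.of fun X Y => if IsUnionOfBlocks a X Y then (1 : K) else 0

/-- The involution `a*` of a partition. -/
def ptnStar {m n : ℕ} (a : Ptn m n) : Ptn n m :=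
  Setoid.comap Sum.swap a

/-- First projection used to define the tensor sum. -/
def tensorProj₁ {m n s t : ℕ} :
    (Fin m ⊕ Fin s) ⊕ (Fin n ⊕ Fin t) → Option (Fin m ⊕ Fin n)
  | Sum.inl (Sum.inl i) => some (Sum.inl i)
  | Sum.inl (Sum.inr _) => none
  | Sum.inr (Sum.inl j) => some (Sum.inr j)
  | Sum.inr (Sum.inr _) => none

/-- Second projection used to define the tensor sum. -/
def tensorProj₂ {m n s t : ℕ} :
    (Fin m ⊕ Fin s) ⊕ (Fin n ⊕ Fin t) → Option (Fin s ⊕ Fin t)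
  | Sum.inl (Sum.inl _) => none
  | Sum.inl (Sum.inr i) => some (Sum.inl i)
  | Sum.inr (Sum.inl _) => none
  | Sum.inr (Sum.inr j) => some (Sum.inr j)

/-- The tensor sum `a ⊞ b` of partitions. -/
def ptnTensor {m n s t : ℕ} (a : Ptn m n) (b : Ptn s t) : Ptn (m + s) (n + t) :=
  Setoid.comap (Sum.map finSumFinEquiv.symm finSumFinEquiv.symm)
    (Relation.EqvGen.setoid fun u v =>
      (∃ p q, tensorProj₁ u = some p ∧ tensorProj₁ v = some q ∧ a.r p q) ∨
      (∃ p q, tensorProj₂ u = some p ∧ tensorProj₂ v = some q ∧ b.r p q))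

/-- The generating relation of the product graph `Π(a,b)`. -/
def prodGen {m n t : ℕ} (a : Ptn m n) (b : Ptn n t) :
    (Fin m ⊕ Fin n ⊕ Fin t) → (Fin m ⊕ Fin n ⊕ Fin t) → Prop :=
  fun u v =>
    (∃ p q, a.r p q ∧ u = Sum.map id Sum.inl p ∧ v = Sum.map id Sum.inl q) ∨
    (∃ p q, b.r p q ∧ u = Sum.inr p ∧ v = Sum.inr q)

/-- The equivalence `∼` on `Fin m ⊕ Fin n ⊕ Fin t` generated by `a` and `b`. -/
def prodSetoid {m n t : ℕ} (a : Ptn m n) (b : Ptn n t) :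
    Setoid (Fin m ⊕ Fin n ⊕ Fin t) :=
  Relation.EqvGen.setoid (prodGen a b)

/-- The product `ab` of composable partitions. -/
def ptnMul {m n t : ℕ} (a : Ptn m n) (b : Ptn n t) : Ptn m t :=
  Setoid.comap (Sum.map id Sum.inr) (prodSetoid a b)

/-- The twisting number `Φ(a,b)`: the number of `∼`-classes contained in the middle copy. -/
noncomputable def Phi {m n t : ℕ} (a : Ptn m n) (b : Ptn n t) : ℕ :=
  Nat.card {C : Quotient (prodSetoid a b) //
    ∀ u, Quotient.mk (prodSetoid a b) u = C → ∃ j : Fin n, u = Sum.inr (Sum.inl j)}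

/-- The identity partition `ι_n`. -/
def idPtn (n : ℕ) : Ptn n n :=
  Relation.EqvGen.setoid fun u v => ∃ i : Fin n, u = Sum.inl i ∧ v = Sum.inr i

/-- `X` is a union of `ker(a)`-classes. -/
def KerClosed {m n : ℕ} (a : Ptn m n) (X : Finset (Fin m)) : Prop :=
  ∀ x ∈ X, ∀ i : Fin m, a.r (Sum.inl x) (Sum.inl i) → i ∈ X

/-- `Y` is a union of `coker(a)`-classes. -/
def CokerClosed {m n : ℕ} (a : Ptn m n) (Y : Finset (Fin n)) : Prop :=
  ∀ y ∈ Y, ∀ j : Fin n, a.r (Sum.inr y) (Sum.inr j) → j ∈ Y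

/-- The image `Xa` of `X` under `a`. -/
noncomputable def ptnImage {m n : ℕ} (a : Ptn m n) (X : Finset (Fin m)) :
    Finset (Fin n) :=
  Finset.univ.filter fun j => ∃ x ∈ X, a.r (Sum.inl x) (Sum.inr j)

/-- The preimage `aY` of `Y` under `a`. -/
noncomputable def ptnPreimage {m n : ℕ} (a : Ptn m n) (Y : Finset (Fin n)) :
    Finset (Fin m) :=
  Finset.univ.filter fun i => ∃ y ∈ Y, a.r (Sum.inl i) (Sum.inr y)

/-- `Z` is an intertwining set for `(a,b)` with respect to `(X,Y)`. -/
def Intertwining {m n t : ℕ} (a : Ptn m n) (b : Ptn n t)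
    (X : Finset (Fin m)) (Y : Finset (Fin t)) (Z : Finset (Fin n)) : Prop :=
  IsUnionOfBlocks a X Z ∧ IsUnionOfBlocks b Z Y

/-- A Brauer partition: every block has exactly two elements. -/
def IsBrauer {m n : ℕ} (a : Ptn m n) : Prop :=
  ∀ u : Fin m ⊕ Fin n, Nat.card {v // a.r u v} = 2

/-- The clockwise boundary order on the vertices of a diagram. -/
def beta (m n : ℕ) : Fin m ⊕ Fin n → ℕ
  | Sum.inl i => (i : ℕ)
  | Sum.inr j => m + n - 1 - (j : ℕ)

/-- A Temperley–Lieb partition: a planar (non-crossing) Brauer partition. -/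
def IsTL {m n : ℕ} (a : Ptn m n) : Prop :=
  IsBrauer a ∧
    ¬ ∃ u v p q : Fin m ⊕ Fin n, a.r u v ∧ a.r p q ∧
        beta m n u < beta m n p ∧ beta m n p < beta m n v ∧ beta m n v < beta m n q

/-- The domain of a partition: upper vertices lying in transversal blocks. -/
noncomputable def ptnDom {m n : ℕ} (a : Ptn m n) : Finset (Fin m) :=
  Finset.univ.filter fun i => ∃ j : Fin n, a.r (Sum.inl i) (Sum.inr j)

/-- The codomain of a partition: lower vertices lying in transversal blocks. -/
noncomputable def ptnCodom {m n : ℕ} (a : Ptn m n) : Finset (Fin n) :=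
  Finset.univ.filter fun j => ∃ i : Fin m, a.r (Sum.inl i) (Sum.inr j)

/-- The rank of a partition: the number of transversal blocks. -/
noncomputable def ptnRank {m n : ℕ} (a : Ptn m n) : ℕ :=
  Nat.card {C : Quotient a // ∃ (i : Fin m) (j : Fin n),
    Quotient.mk a (Sum.inl i) = C ∧ Quotient.mk a (Sum.inr j) = C}

/-- An even-gap subset of `Fin n`. -/
def IsEvenGap {n : ℕ} (X : Finset (Fin n)) : Prop :=
  X.card ≡ n [MOD 2] ∧
    ∀ (k : ℕ) (h : k < (X.sort (· ≤ ·)).length),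
      (((X.sort (· ≤ ·)).get ⟨k, h⟩ : ℕ) + 1) ≡ (k + 1) [MOD 2]

/-- The reduced (even-gap) matrix of a partition. -/
noncomputable def tlMatrix (K : Type) [Semiring K] {m n : ℕ} (a : Ptn m n) :
    Matrix {X : Finset (Fin m) // IsEvenGap X} {Y : Finset (Fin n) // IsEvenGap Y} K :=
  Matrix.of fun X Y => if IsUnionOfBlocks a X.1 Y.1 then (1 : K) else 0

/-- The standard basis vector `e_X` of `V_n`. -/
def eVec (K : Type) [Semiring K] {n : ℕ} (X : Finset (Fin n)) :
    Finset (Fin n) → K :=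
  Pi.single X 1

/-- The subspace `V_n⁺`. -/
def Vplus (K : Type) [Field K] (n : ℕ) : Submodule K (Finset (Fin n) → K) :=
  Submodule.span K (Set.range fun X : Finset (Fin n) => eVec K X + eVec K Xᶜ)

/-- The subspace `V_n⁻`. -/
def Vminus (K : Type) [Field K] (n : ℕ) : Submodule K (Finset (Fin n) → K) :=
  Submodule.span K (Set.range fun X : Finset (Fin n) => eVec K X - eVec K Xᶜ)

-- AUX
lemma eVec_apply (K : Type) [Semiring K] {n : ℕ} (X V : Finset (Fin n)) :
    eVec K X V = if V = X then 1 else 0 := Pi.single_apply X 1 V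

lemma mem_compl_union {m n : ℕ} (X : Finset (Fin m)) (Y : Finset (Fin n))
    (u : Fin m ⊕ Fin n) :
    u ∈ Sum.inl '' ((Xᶜ : Finset (Fin m)) : Set (Fin m)) ∪ Sum.inr '' ((Yᶜ : Finset (Fin n)) : Set (Fin n)) ↔
    u ∉ Sum.inl '' ((X : Finset (Fin m)) : Set (Fin m)) ∪ Sum.inr '' ((Y : Finset (Fin n)) : Set (Fin n)) := by
  cases u <;> simp

lemma isUnion_compl {m n : ℕ} (a : Ptn m n) (X : Finset (Fin m)) (Y : Finset (Fin n)) :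
    IsUnionOfBlocks a Xᶜ Yᶜ ↔ IsUnionOfBlocks a X Y := by
  constructor <;> intro h u v huv
  · have := h u v huv
    rw [mem_compl_union, mem_compl_union] at this
    exact not_iff_not.mp this
  · rw [mem_compl_union, mem_compl_union]
    exact not_iff_not.mpr (h u v huv)

lemma mulVec_eVec (K : Type) [Field K] {m n : ℕ} (a : Ptn m n) (Y : Finset (Fin n)) :
    (ptnMatrix K a).mulVec (eVec K Y)
      = fun X => if IsUnionOfBlocks a X Y then (1:K) else 0 := by
  funext X
  rw [eVec, Matrix.mulVec_single]
  simp [ptnMatrix]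

lemma mem_Vplus_of (K : Type) [Field K] [CharZero K] {n : ℕ} (w : Finset (Fin n) → K)
    (h : ∀ X, w Xᶜ = w X) : w ∈ Vplus K n := by
  have hw : w = (2:K)⁻¹ • ∑ X : Finset (Fin n), w X • (eVec K X + eVec K Xᶜ) := by
    funext V
    have h1 : ∑ X : Finset (Fin n), w X * (if V = X then (1:K) else 0) = w V := by
      simp [mul_ite]
    have h2 : ∑ X : Finset (Fin n), w X * (if V = Xᶜ then (1:K) else 0) = w Vᶜ := by
      have : ∀ X : Finset (Fin n), (V = Xᶜ) = (Vᶜ = X) :=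
        fun X => propext ⟨fun hh => by rw [hh, compl_compl], fun hh => by rw [← hh, compl_compl]⟩
      simp only [this]
      simp [mul_ite]
    simp only [Pi.smul_apply, Finset.sum_apply, Pi.add_apply, smul_eq_mul, eVec_apply,
      mul_add, Finset.sum_add_distrib, h1, h2, h V]
    ring
  rw [hw]
  refine Submodule.smul_mem _ _ (Submodule.sum_mem _ fun X _ => Submodule.smul_mem _ _ ?_)
  exact Submodule.subset_span ⟨X, rfl⟩

lemma mem_Vminus_of (K : Type) [Field K] [CharZero K] {n : ℕ} (w : Finset (Fin n) → K)
    (h : ∀ X, w Xᶜ = - w X) : w ∈ Vminus K n := by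
  have hw : w = (2:K)⁻¹ • ∑ X : Finset (Fin n), w X • (eVec K X - eVec K Xᶜ) := by
    funext V
    have h1 : ∑ X : Finset (Fin n), w X * (if V = X then (1:K) else 0) = w V := by
      simp [mul_ite]
    have h2 : ∑ X : Finset (Fin n), w X * (if V = Xᶜ then (1:K) else 0) = w Vᶜ := by
      have : ∀ X : Finset (Fin n), (V = Xᶜ) = (Vᶜ = X) :=
        fun X => propext ⟨fun hh => by rw [hh, compl_compl], fun hh => by rw [← hh, compl_compl]⟩
      simp only [this]
      simp [mul_ite]
    simp only [Pi.smul_apply, Finset.sum_apply, Pi.sub_apply, smul_eq_mul, eVec_apply,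
      mul_sub, Finset.sum_sub_distrib, h1, h2, h V]
    ring
  rw [hw]
  refine Submodule.smul_mem _ _ (Submodule.sum_mem _ fun X _ => Submodule.smul_mem _ _ ?_)
  exact Submodule.subset_span ⟨X, rfl⟩

-- the plus partition
def gPlus {n : ℕ} (X : Finset (Fin n)) : Fin n ⊕ Fin n → Bool ⊕ Fin n
  | Sum.inl i => Sum.inl (decide (i ∈ X))
  | Sum.inr j => Sum.inr j

def aPlus {n : ℕ} (X : Finset (Fin n)) : Ptn n n := Setoid.ker (gPlus X)

def CondP {n : ℕ} (X W : Finset (Fin n)) : Prop :=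
  ∀ i i', (i ∈ X ↔ i' ∈ X) → (i ∈ W ↔ i' ∈ W)

lemma isUnion_aPlus {n : ℕ} (X W Y : Finset (Fin n)) :
    IsUnionOfBlocks (aPlus X) W Y ↔ CondP X W := by
  constructor
  · intro h i i' hii
    have hrel : (aPlus X).r (Sum.inl i) (Sum.inl i') := by
      show gPlus X (Sum.inl i) = gPlus X (Sum.inl i')
      simp [gPlus, decide_eq_decide, hii]
    have := h _ _ hrel
    simpa using this
  · intro hc u v huv
    have huv' : gPlus X u = gPlus X v := huv
    cases u with
    | inl i =>
      cases v with
      | inl i' =>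
        simp only [gPlus, Sum.inl.injEq, decide_eq_decide] at huv'
        simpa using hc i i' huv'
      | inr j => simp [gPlus] at huv'
    | inr j =>
      cases v with
      | inl i => simp [gPlus] at huv'
      | inr j' =>
        simp only [gPlus, Sum.inr.injEq] at huv'
        subst huv'; rfl

lemma condP_iff {n : ℕ} (X W : Finset (Fin n)) {i0 i1 : Fin n} (h0 : i0 ∈ X) (h1 : i1 ∉ X) :
    CondP X W ↔ (W = ∅ ∨ W = X ∨ W = Xᶜ ∨ W = Finset.univ) := by
  constructor
  · intro hc
    by_cases hw0 : i0 ∈ W <;> by_cases hw1 : i1 ∈ W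
    · right; right; right
      ext i; simp only [Finset.mem_univ, iff_true]
      by_cases hi : i ∈ X
      · exact (hc i0 i (by simp [h0, hi])).mp hw0
      · exact (hc i1 i (by simp [h1, hi])).mp hw1
    · right; left
      ext i
      constructor
      · intro hiw
        by_contra hi
        exact hw1 ((hc i i1 (by simp [h1, hi])).mp hiw)
      · intro hi
        exact (hc i0 i (by simp [h0, hi])).mp hw0
    · right; right; left
      ext i; simp only [Finset.mem_compl]
      constructor
      · intro hiw hi
        exact hw0 ((hc i i0 (by simp [h0, hi])).mp hiw)
      · intro hi
        exact (hc i1 i (by simp [h1, hi])).mp hw1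
    · left
      ext i; simp only [Finset.notMem_empty, iff_false]
      intro hiw
      by_cases hi : i ∈ X
      · exact hw0 ((hc i i0 (by simp [h0, hi])).mp hiw)
      · exact hw1 ((hc i i1 (by simp [h1, hi])).mp hiw)
  · rintro (rfl | rfl | rfl | rfl) <;> intro i i' hii <;> simp [Finset.mem_compl, hii]

-- the minus partition
def gMinus {n : ℕ} (X : Finset (Fin n)) : Fin n ⊕ Fin n → Option (Fin n)
  | Sum.inl i => if i ∈ X then none else some i
  | Sum.inr _ => none

def aMinus {n : ℕ} (X : Finset (Fin n)) : Ptn n n := Setoid.ker (gMinus X)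

lemma isUnion_aMinus_univ {n : ℕ} (X W : Finset (Fin n)) :
    IsUnionOfBlocks (aMinus X) W Finset.univ ↔ X ⊆ W := by
  constructor
  · intro h i hi
    have hrel : (aMinus X).r (Sum.inl i) (Sum.inr i) := by
      show gMinus X (Sum.inl i) = gMinus X (Sum.inr i)
      simp [gMinus, hi]
    have := h _ _ hrel
    simpa using this
  · intro hXW u v huv
    have huv' : gMinus X u = gMinus X v := huv
    cases u with
    | inl i =>
      cases v with
      | inl i' =>
        simp only [gMinus] at huv'
        by_cases hi : i ∈ X <;> by_cases hi' : i' ∈ X <;> simp [hi, hi'] at huv' ⊢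
        · exact iff_of_true (hXW hi) (hXW hi')
        · subst huv'; rfl
      | inr j =>
        simp only [gMinus] at huv'
        by_cases hi : i ∈ X <;> simp [hi] at huv' ⊢
        exact hXW hi
    | inr j =>
      cases v with
      | inl i =>
        simp only [gMinus] at huv'
        by_cases hi : i ∈ X <;> simp [hi] at huv' ⊢
        exact hXW hi
      | inr j' => simp

lemma isUnion_aMinus_empty {n : ℕ} (X W : Finset (Fin n)) :
    IsUnionOfBlocks (aMinus X) W ∅ ↔ X ⊆ Wᶜ := by
  constructor
  · intro h i hi
    have hrel : (aMinus X).r (Sum.inl i) (Sum.inr i) := by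
      show gMinus X (Sum.inl i) = gMinus X (Sum.inr i)
      simp [gMinus, hi]
    have := h _ _ hrel
    simpa using this
  · intro hXW u v huv
    have huv' : gMinus X u = gMinus X v := huv
    cases u with
    | inl i =>
      cases v with
      | inl i' =>
        simp only [gMinus] at huv'
        by_cases hi : i ∈ X <;> by_cases hi' : i' ∈ X <;> simp [hi, hi'] at huv' ⊢
        · exact iff_of_false (by simpa using hXW hi) (by simpa using hXW hi')
        · subst huv'; rfl
      | inr j =>
        simp only [gMinus] at huv'
        by_cases hi : i ∈ X <;> simp [hi] at huv' ⊢
        exact by simpa using hXW hi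
    | inr j =>
      cases v with
      | inl i =>
        simp only [gMinus] at huv'
        by_cases hi : i ∈ X <;> simp [hi] at huv' ⊢
        exact by simpa using hXW hi
      | inr j' => simp

lemma mulVec_aMinus (K : Type) [Field K] [CharZero K] {n : ℕ} (X : Finset (Fin n)) :
    (ptnMatrix K (aMinus X)).mulVec (eVec K Finset.univ - eVec K ∅)
      = ∑ W ∈ Finset.univ.filter (fun W : Finset (Fin n) => X ⊆ W),
          (eVec K W - eVec K Wᶜ) := by
  funext V
  rw [Matrix.mulVec_sub]
  simp only [Pi.sub_apply, Finset.sum_apply]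
  rw [mulVec_eVec, mulVec_eVec]
  simp only [isUnion_aMinus_univ, isUnion_aMinus_empty, Pi.sub_apply, eVec_apply]
  have h1 : ∑ W ∈ Finset.univ.filter (fun W : Finset (Fin n) => X ⊆ W),
      ((if V = W then (1:K) else 0) - (if V = Wᶜ then (1:K) else 0))
      = (if X ⊆ V then (1:K) else 0) - (if X ⊆ Vᶜ then (1:K) else 0) := by
    rw [Finset.sum_sub_distrib]
    congr 1
    · rw [Finset.sum_ite_eq]
      simp
    · have : ∀ W : Finset (Fin n), (V = Wᶜ) = (Vᶜ = W) :=
        fun W => propext ⟨fun hh => by rw [hh, compl_compl], fun hh => by rw [← hh, compl_compl]⟩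
      simp only [this]
      rw [Finset.sum_ite_eq]
      simp
  rw [h1]

lemma isUnion_compl_left {m n : ℕ} (a : Ptn m n) (X : Finset (Fin m)) (Y : Finset (Fin n)) :
    IsUnionOfBlocks a Xᶜ Y ↔ IsUnionOfBlocks a X Yᶜ := by
  rw [← isUnion_compl a X Yᶜ, compl_compl]

lemma mulVec_aPlus (K : Type) [Field K] [CharZero K] {n : ℕ} (X : Finset (Fin n))
    {i0 i1 : Fin n} (h0 : i0 ∈ X) (h1 : i1 ∉ X) :
    (ptnMatrix K (aPlus X)).mulVec (eVec K Finset.univ + eVec K ∅)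
      = (2:K) • (eVec K ∅ + eVec K X + eVec K Xᶜ + eVec K Finset.univ) := by
  have hd1 : X ≠ ∅ := Finset.ne_empty_of_mem h0
  have hd2 : Xᶜ ≠ ∅ := Finset.ne_empty_of_mem (Finset.mem_compl.mpr h1)
  have hd3 : (Finset.univ : Finset (Fin n)) ≠ ∅ := Finset.ne_empty_of_mem (Finset.mem_univ i0)
  have hd4 : X ≠ Xᶜ := fun h => (Finset.mem_compl.mp (h ▸ h0)) h0
  have hd5 : X ≠ Finset.univ := fun h => h1 (h ▸ Finset.mem_univ i1)
  have hd6 : Xᶜ ≠ Finset.univ := fun h => (Finset.mem_compl.mp (h ▸ Finset.mem_univ i0)) h0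
  funext V
  rw [Matrix.mulVec_add]
  simp only [Pi.add_apply]
  rw [mulVec_eVec, mulVec_eVec]
  simp only [isUnion_aPlus, condP_iff X V h0 h1, Pi.smul_apply, Pi.add_apply, eVec_apply,
    smul_eq_mul]
  by_cases hP : V = ∅ ∨ V = X ∨ V = Xᶜ ∨ V = Finset.univ
  · rcases hP with rfl | rfl | rfl | rfl <;>
      simp [hd1, hd2, hd3, hd4, hd5, hd6, Ne.symm hd1, Ne.symm hd2, Ne.symm hd3,
        Ne.symm hd4, Ne.symm hd5, Ne.symm hd6] <;> norm_num
  · push_neg at hP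
    simp [hP.1.ne_empty, hP.2.1, hP.2.2.1, hP.2.2.2]

/-- `V_n⁺` is the submodule generated by `e_univ + e_∅`, and for `n ≥ 1`,
`V_n⁻` is the submodule generated by `e_univ - e_∅`. -/
theorem Vpm_generated (K : Type) [Field K] [CharZero K] :
    (∀ n : ℕ,
      sInf {U : Submodule K (Finset (Fin n) → K) |
        (eVec K (Finset.univ : Finset (Fin n)) + eVec K (∅ : Finset (Fin n))) ∈ U ∧
        ∀ (a : Ptn n n), ∀ v ∈ U, (ptnMatrix K a).mulVec v ∈ U} = Vplus K n) ∧
    (∀ n : ℕ, 1 ≤ n →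
      sInf {U : Submodule K (Finset (Fin n) → K) |
        (eVec K (Finset.univ : Finset (Fin n)) - eVec K (∅ : Finset (Fin n))) ∈ U ∧
        ∀ (a : Ptn n n), ∀ v ∈ U, (ptnMatrix K a).mulVec v ∈ U} = Vminus K n) := by
  constructor
  · intro n
    apply le_antisymm
    · apply sInf_le
      refine ⟨?_, ?_⟩
      · have h : eVec K (Finset.univ : Finset (Fin n)) + eVec K ((Finset.univ : Finset (Fin n))ᶜ)
            ∈ Vplus K n := Submodule.subset_span ⟨Finset.univ, rfl⟩
        rwa [Finset.compl_univ] at h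
      · intro a v hv
        have hmap : Submodule.map (Matrix.mulVecLin (ptnMatrix K a)) (Vplus K n)
            ≤ Vplus K n := by
          rw [Vplus, Submodule.map_span_le]
          rintro _ ⟨Y, rfl⟩
          rw [Matrix.mulVecLin_apply]
          apply mem_Vplus_of
          intro V
          rw [Matrix.mulVec_add, mulVec_eVec, mulVec_eVec]
          simp only [Pi.add_apply,
            show IsUnionOfBlocks a Vᶜ Y ↔ IsUnionOfBlocks a V Yᶜ from isUnion_compl_left a V Y,
            show IsUnionOfBlocks a Vᶜ Yᶜ ↔ IsUnionOfBlocks a V Y from isUnion_compl a V Y]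
          exact add_comm _ _
        exact hmap ⟨v, hv, Matrix.mulVecLin_apply _ _⟩
    · apply le_sInf
      rintro U ⟨hgen, hstab⟩
      rw [Vplus, Submodule.span_le]
      rintro _ ⟨X, rfl⟩
      simp only [SetLike.mem_coe]
      by_cases hX0 : X = ∅
      · subst hX0
        rw [Finset.compl_empty, add_comm]
        exact hgen
      by_cases hX1 : X = Finset.univ
      · subst hX1
        rw [Finset.compl_univ]
        exact hgen
      obtain ⟨i0, h0⟩ := Finset.nonempty_iff_ne_empty.mpr hX0
      obtain ⟨i1, h1⟩ : ∃ i, i ∉ X := by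
        by_contra h
        push_neg at h
        exact hX1 (Finset.eq_univ_iff_forall.mpr h)
      have hm : (ptnMatrix K (aPlus X)).mulVec (eVec K Finset.univ + eVec K ∅) ∈ U :=
        hstab _ _ hgen
      rw [mulVec_aPlus K X h0 h1] at hm
      have h2 : eVec K X + eVec K Xᶜ
          = (2:K)⁻¹ • ((2:K) • (eVec K ∅ + eVec K X + eVec K Xᶜ + eVec K Finset.univ))
            - (eVec K Finset.univ + eVec K ∅) := by
        rw [smul_smul, inv_mul_cancel₀ two_ne_zero, one_smul]
        abel
      rw [h2]
      exact Submodule.sub_mem _ (Submodule.smul_mem _ _ hm) hgen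
  · intro n _hn
    apply le_antisymm
    · apply sInf_le
      refine ⟨?_, ?_⟩
      · have h : eVec K (Finset.univ : Finset (Fin n)) - eVec K ((Finset.univ : Finset (Fin n))ᶜ)
            ∈ Vminus K n := Submodule.subset_span ⟨Finset.univ, rfl⟩
        rwa [Finset.compl_univ] at h
      · intro a v hv
        have hmap : Submodule.map (Matrix.mulVecLin (ptnMatrix K a)) (Vminus K n)
            ≤ Vminus K n := by
          rw [Vminus, Submodule.map_span_le]
          rintro _ ⟨Y, rfl⟩
          rw [Matrix.mulVecLin_apply]
          apply mem_Vminus_of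
          intro V
          rw [Matrix.mulVec_sub, mulVec_eVec, mulVec_eVec]
          simp only [Pi.sub_apply,
            show IsUnionOfBlocks a Vᶜ Y ↔ IsUnionOfBlocks a V Yᶜ from isUnion_compl_left a V Y,
            show IsUnionOfBlocks a Vᶜ Yᶜ ↔ IsUnionOfBlocks a V Y from isUnion_compl a V Y]
          exact (neg_sub _ _).symm
        exact hmap ⟨v, hv, Matrix.mulVecLin_apply _ _⟩
    · apply le_sInf
      rintro U ⟨hgen, hstab⟩
      have key : ∀ k, ∀ X : Finset (Fin n), X.Nonempty → Xᶜ.card ≤ k →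
          eVec K X - eVec K Xᶜ ∈ U := by
        intro k
        induction k with
        | zero =>
          intro X hne hc
          have h0 : Xᶜ = ∅ := Finset.card_eq_zero.mp (Nat.le_zero.mp hc)
          have hXu : X = Finset.univ := by
            have := congrArg (·ᶜ) h0
            simpa [compl_compl] using this
          subst hXu
          rw [Finset.compl_univ]
          exact hgen
        | succ k ih =>
          intro X hne hc
          have hF : (∑ W ∈ Finset.univ.filter (fun W : Finset (Fin n) => X ⊆ W),
              (eVec K W - eVec K Wᶜ)) ∈ U := by
            rw [← mulVec_aMinus]
            exact hstab _ _ hgen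
          have hXmem : X ∉ Finset.univ.filter (fun W : Finset (Fin n) => X ⊂ W) := by
            simp only [Finset.mem_filter, Finset.mem_univ, true_and]
            exact fun h => h.ne rfl
          have hsplit : Finset.univ.filter (fun W : Finset (Fin n) => X ⊆ W)
              = insert X (Finset.univ.filter (fun W : Finset (Fin n) => X ⊂ W)) := by
            ext W
            simp only [Finset.mem_filter, Finset.mem_univ, true_and, Finset.mem_insert]
            constructor
            · intro h
              by_cases hw : W = X
              · exact Or.inl hw
              · exact Or.inr (Finset.ssubset_iff_subset_ne.mpr ⟨h, fun he => hw he.symm⟩)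
            · rintro (rfl | h)
              · exact Finset.Subset.refl _
              · exact h.subset
          rw [hsplit, Finset.sum_insert hXmem] at hF
          have heq : eVec K X - eVec K Xᶜ
              = (eVec K X - eVec K Xᶜ
                  + ∑ W ∈ Finset.univ.filter (fun W : Finset (Fin n) => X ⊂ W),
                      (eVec K W - eVec K Wᶜ))
                - ∑ W ∈ Finset.univ.filter (fun W : Finset (Fin n) => X ⊂ W),
                    (eVec K W - eVec K Wᶜ) := by
            abel
          rw [heq]
          refine Submodule.sub_mem _ hF (Submodule.sum_mem _ ?_)
          intro W hW
          simp only [Finset.mem_filter, Finset.mem_univ, true_and] at hW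
          refine ih W (hne.mono hW.subset) ?_
          have hcard : X.card < W.card := Finset.card_lt_card hW
          have hWc : Wᶜ.card = Fintype.card (Fin n) - W.card := Finset.card_compl W
          have hXc : Xᶜ.card = Fintype.card (Fin n) - X.card := Finset.card_compl X
          have hWle : W.card ≤ Fintype.card (Fin n) := Finset.card_le_univ W
          omega
      rw [Vminus, Submodule.span_le]
      rintro _ ⟨X, rfl⟩
      simp only [SetLike.mem_coe]
      by_cases hX0 : X = ∅
      · subst hX0
        rw [Finset.compl_empty]
        have := U.neg_mem hgen
        rwa [neg_sub] at this
      · exact key _ X (Finset.nonempty_iff_ne_empty.mpr hX0) le_rfl
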